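/- arXiv:2406.15919 — 3 statements merged into one kernel-verified Lean document; each statement's English description precedes it below -/
import Mathlib

section
/- Let k be a field of characteristic zero, S = k[x,y] with the standard grading, let a, b be positive integers, J = (x^a, y^b), and let I be a monomial ideal of S with J ⊆ I and I/J ≠ 0. Then the graded S-module M = I/J has the strong Lefschetz property; in fact ℓ = x + y is a strong Lefschetz element, i.e., for every d > 0 and every i the multiplication map ×(x+y)^d : M_i → M_{i+d} is either injective or surjective. -/
/-!
In degree `t` the module `I/J` has a basis of monomials `x ^ i * y ^ (t - i)` lying in `I` but not
in `J`, indexed by a set `Aₜ` of `x`-exponents, and multiplication by `(x + y) ^ d` has the matrix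
`(choose d (j - i))` with `i ∈ Aₜ`, `j ∈ Aₜ₊d`. Since `I` is an ideal, `Aₜ₊d` contains every
admissible exponent that a step in `[0, d]` reaches from `Aₜ`.

A square band matrix `(choose d (v s - u r))` with `u`, `v` strictly increasing has nonnegative
determinant, which is positive when `u r ≤ v r ≤ u r + d` for all `r`: Pascal's rule splits each
row, and the determinant becomes a sum of band determinants for `d - 1`. In characteristic zero
such a minor is invertible, and one of maximal size exists: if `|Aₜ| ≤ |Aₜ₊d|` it is given by an
explicit matching, otherwise by a greedy one, since Hall's condition for intervals holds.
-/

open MvPolynomial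

/-- The degree-`i` homogeneous component of the graded `k[x₁,…,xₙ]`-module `I/J`
(realized as the image of `I ∩ Sᵢ` in `S ⧸ J`). -/
noncomputable def gradedPiece {k : Type} [Field k] {n : ℕ}
    (J I : Ideal (MvPolynomial (Fin n) k)) (i : ℕ) :
    Submodule k (MvPolynomial (Fin n) k ⧸ J) :=
  Submodule.map (Ideal.Quotient.mkₐ k J).toLinearMap
    (Submodule.restrictScalars k I ⊓ homogeneousSubmodule (Fin n) k i)

/-- `ℓ` is a strong Lefschetz element for the graded module `I/J`: for all `d > 0` and all `i`,
multiplication by `ℓ^d` from the degree-`i` component to the degree-`i+d` component is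
injective or surjective. -/
def IsSLE {k : Type} [Field k] {n : ℕ} (J I : Ideal (MvPolynomial (Fin n) k))
    (ℓ : MvPolynomial (Fin n) k) : Prop :=
  ∀ d : ℕ, 0 < d → ∀ i : ℕ,
    (∀ m ∈ gradedPiece J I i, Ideal.Quotient.mk J (ℓ ^ d) * m = 0 → m = 0) ∨
    (∀ m' ∈ gradedPiece J I (i + d), ∃ m ∈ gradedPiece J I i,
      Ideal.Quotient.mk J (ℓ ^ d) * m = m')

/-- A monomial ideal: an ideal generated by a set of monomials. -/
def IsMonomialIdeal {k : Type} [Field k] {n : ℕ} (I : Ideal (MvPolynomial (Fin n) k)) : Prop :=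
  ∃ T : Set (Fin n →₀ ℕ), I = Ideal.span ((fun e => monomial e (1 : k)) '' T)

open Finset

def bandEntry (d u v : ℕ) : ℕ := if u ≤ v then d.choose (v - u) else 0

lemma bandEntry_succ (d u v : ℕ) :
    bandEntry (d + 1) u v = bandEntry d u v + bandEntry d (u + 1) v := by
  unfold bandEntry
  rcases lt_trichotomy u v with h | rfl | h
  · simp only [if_pos h.le, if_pos (show u + 1 ≤ v from h)]
    rw [show v - u = v - (u + 1) + 1 by omega, Nat.choose_succ_succ', add_comm]
  · simp
  · rw [if_neg (by omega), if_neg (by omega), if_neg (by omega)]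

lemma bandEntry_zero (u v : ℕ) : bandEntry 0 u v = if u = v then 1 else 0 := by
  unfold bandEntry
  rcases lt_trichotomy u v with h | rfl | h
  · rw [if_pos h.le, Nat.choose_eq_zero_of_lt (by omega), if_neg h.ne]
  · simp
  · rw [if_neg (by omega), if_neg (by omega)]

lemma bandEntry_eq_zero {d u v : ℕ} (h : ¬ (u ≤ v ∧ v ≤ u + d)) :
    bandEntry d u v = 0 := by
  unfold bandEntry
  split_ifs with huv
  · exact Nat.choose_eq_zero_of_lt (by omega)
  · rfl

lemma StrictMono.apply_zero_add_le {n : ℕ} {u : Fin n → ℕ} (hu : StrictMono u) (r : Fin n) :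
    u ⟨0, r.pos⟩ + r ≤ u r := by
  have := card_le_card (image_subset_iff.mpr fun x hx => mem_Icc.mpr
    ⟨hu.monotone (mem_Icc.mp hx).1, hu.monotone (mem_Icc.mp hx).2⟩ :
      (Icc ⟨0, r.pos⟩ r).image u ⊆ Icc (u ⟨0, r.pos⟩) (u r))
  rw [card_image_of_injective _ hu.injective, Fin.card_Icc, Nat.card_Icc] at this
  have : ((⟨0, r.pos⟩ : Fin n) : ℕ) = 0 := rfl
  omega

lemma StrictMono.monotone_add_ite_mem {ι : Type*} [PartialOrder ι] [DecidableEq ι] {u : ι → ℕ}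
    (hu : StrictMono u) (S : Finset ι) :
    Monotone fun r => u r + if r ∈ S then 1 else 0 := by
  intro r r' h
  rcases h.lt_or_eq with h | rfl
  · have := hu h
    simp only
    split_ifs <;> omega
  · rfl

section BandMatrix

variable {ι : Type*}

variable (R : Type*) [CommRing R] in
def bandMatrix (d : ℕ) (u v : ι → ℕ) : Matrix ι ι R :=
  Matrix.of fun r s => (bandEntry d (u r) (v s) : R)

lemma bandMatrix_zero_self {R : Type*} [CommRing R] [DecidableEq ι] {u : ι → ℕ}
    (hu : Function.Injective u) : bandMatrix R 0 u u = 1 := by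
  ext r s
  simp [bandMatrix, bandEntry_zero, Matrix.one_apply, hu.eq_iff]

variable [Fintype ι] [LinearOrder ι]

lemma det_bandMatrix_succ {R : Type*} [CommRing R] (d : ℕ) (u v : ι → ℕ) :
    (bandMatrix R (d + 1) u v).det =
      ∑ S : Finset ι, (bandMatrix R d (fun r => u r + if r ∈ S then 1 else 0) v).det := by
  have hsplit : bandMatrix R (d + 1) u v =
      bandMatrix R d (fun r => u r + 1) v + bandMatrix R d u v := by
    ext r s
    simp [bandMatrix, bandEntry_succ, add_comm]
  rw [hsplit]
  refine (Matrix.detRowAlternating.map_add_univ _ _).trans (sum_congr rfl fun S _ => ?_)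
  congr 1
  ext r s
  by_cases hr : r ∈ S <;> simp [Finset.piecewise, hr, bandMatrix]

lemma StrictMono.eq_or_exists_forall_ne {u v : ι → ℕ} (hu : StrictMono u) (hv : StrictMono v) :
    u = v ∨ ∃ r, ∀ s, u r ≠ v s := by
  by_contra! h
  obtain ⟨hne, hmem⟩ := h
  choose f hf using hmem
  have himage : univ.image u = univ.image v :=
    eq_of_subset_of_card_le
      (image_subset_iff.mpr fun r _ => hf r ▸ mem_image_of_mem v (mem_univ _))
      (by rw [card_image_of_injective _ hu.injective, card_image_of_injective _ hv.injective])
  refine hne ((hu.range_inj hv).mp ?_)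
  simpa [Set.image_univ] using congrArg (fun s : Finset ℕ => (s : Set ℕ)) himage

lemma det_bandMatrix_nonneg (d : ℕ) {u v : ι → ℕ} (hu : Monotone u) (hv : StrictMono v) :
    0 ≤ (bandMatrix ℤ d u v).det := by
  induction d generalizing u with
  | zero => ?_
  | succ d ih => ?_
  all_goals
    by_cases hinj : Function.Injective u
    swap
    · obtain ⟨r, r', heq, hne⟩ : ∃ r r', u r = u r' ∧ r ≠ r' := by
        simpa [Function.Injective] using hinj
      exact (Matrix.det_zero_of_row_eq hne (funext fun s => by simp [bandMatrix, heq])).ge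
    replace hu := hu.strictMono_of_injective hinj
  · rcases hu.eq_or_exists_forall_ne hv with rfl | ⟨r, hr⟩
    · simp [bandMatrix_zero_self hu.injective]
    · exact (Matrix.det_eq_zero_of_row_eq_zero r fun s => by
        simp [bandMatrix, bandEntry_zero, hr s]).ge
  · rw [det_bandMatrix_succ]
    exact sum_nonneg fun S _ => ih (hu.monotone_add_ite_mem S)

lemma det_bandMatrix_pos (d : ℕ) {u v : ι → ℕ} (hu : StrictMono u) (hv : StrictMono v)
    (hband : ∀ r, u r ≤ v r ∧ v r ≤ u r + d) : 0 < (bandMatrix ℤ d u v).det := by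
  induction d generalizing u with
  | zero =>
    obtain rfl : u = v := funext fun r => by have := hband r; omega
    simp [bandMatrix_zero_self hu.injective]
  | succ d ih =>
    rw [det_bandMatrix_succ]
    -- shift exactly the rows whose band constraint is tight
    set S := univ.filter fun r => v r = u r + (d + 1)
    refine sum_pos' (fun S _ => det_bandMatrix_nonneg d (hu.monotone_add_ite_mem S) hv)
      ⟨S, mem_univ _, ih ?_ fun r => ?_⟩
    · intro r r' h
      have := hu h
      have := hv h
      have := hband r
      have := hband r'
      simp only [S, mem_filter, mem_univ, true_and]
      split_ifs <;> omega
    · have := hband r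
      simp only [S, mem_filter, mem_univ, true_and]
      split_ifs <;> omega

end BandMatrix

lemma hall_condition_filter_lt {n : ℕ} {A : Finset ℕ} {lo hi : Fin (n + 1) → ℕ}
    (hall : ∀ r s : Fin (n + 1), r ≤ s →
      (s - r : ℕ) + 1 ≤ #(A.filter fun x => lo r ≤ x ∧ x ≤ hi s))
    {x₀ : ℕ} (hx₀ : x₀ ≤ hi 0) (hmin : ∀ x ∈ A, lo 0 ≤ x → x ≤ hi 0 → x₀ ≤ x)
    (r s : Fin n) (hrs : r ≤ s) :
    (s - r : ℕ) + 1 ≤ #((A.filter (x₀ < ·)).filter fun x => lo r.succ ≤ x ∧ x ≤ hi s.succ) := by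
  by_cases hlow : x₀ < lo r.succ
  · have hsub : A.filter (fun x => lo r.succ ≤ x ∧ x ≤ hi s.succ) ⊆
        (A.filter (x₀ < ·)).filter fun x => lo r.succ ≤ x ∧ x ≤ hi s.succ := fun x hx => by
      simp only [mem_filter] at hx ⊢
      exact ⟨⟨hx.1, by omega⟩, hx.2⟩
    have := hall r.succ s.succ (Fin.succ_le_succ_iff.mpr hrs)
    simp only [Fin.val_succ] at this
    have := card_le_card hsub
    omega
  · have hsub : A.filter (fun x => lo 0 ≤ x ∧ x ≤ hi s.succ) ⊆
        insert x₀ ((A.filter (x₀ < ·)).filter fun x => lo r.succ ≤ x ∧ x ≤ hi s.succ) := by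
      intro x hx
      simp only [mem_filter, mem_insert] at hx ⊢
      by_cases hx₀x : x₀ < x
      · exact Or.inr ⟨⟨hx.1, hx₀x⟩, by omega, hx.2.2⟩
      · exact Or.inl (le_antisymm (not_lt.mp hx₀x) (hmin x hx.1 hx.2.1 (by omega)))
    have := (card_le_card hsub).trans (card_insert_le _ _)
    have := hall 0 s.succ (Fin.zero_le _)
    simp only [Fin.val_succ, Fin.val_zero] at this
    omega

lemma exists_strictMono_of_hall {n : ℕ} (A : Finset ℕ) (lo hi : Fin n → ℕ)
    (hall : ∀ r s : Fin n, r ≤ s → (s - r : ℕ) + 1 ≤ #(A.filter fun x => lo r ≤ x ∧ x ≤ hi s)) :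
    ∃ ψ : Fin n → ℕ, StrictMono ψ ∧ ∀ r, ψ r ∈ A ∧ lo r ≤ ψ r ∧ ψ r ≤ hi r := by
  induction n generalizing A with
  | zero => exact ⟨finZeroElim, fun r => r.elim0, fun r => r.elim0⟩
  | succ n ih =>
    set C := A.filter fun x => lo 0 ≤ x ∧ x ≤ hi 0
    have hC : C.Nonempty := card_pos.mp (by simpa using hall 0 0 le_rfl)
    obtain ⟨hx₀A, hx₀l, hx₀h⟩ := mem_filter.mp (C.min'_mem hC)
    -- greedily match the first interval with the least available point
    obtain ⟨ψ, hψ, hψmem⟩ :=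
      ih (A.filter (C.min' hC < ·)) (fun r => lo r.succ) (fun r => hi r.succ)
      (hall_condition_filter_lt hall hx₀h fun x hx hlx hxh =>
        C.min'_le x (by simp [C, hx, hlx, hxh]))
    refine ⟨Fin.cons (C.min' hC) ψ, ?_, Fin.cases ⟨hx₀A, hx₀l, hx₀h⟩ fun r => ?_⟩
    · intro i j hij
      cases j using Fin.cases with
      | zero => exact absurd hij (Fin.not_lt_zero i)
      | succ j =>
        cases i using Fin.cases with
        | zero => simpa using (mem_filter.mp (hψmem j).1).2
        | succ i => simpa using hψ (Fin.succ_lt_succ_iff.mp hij)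
    · simpa using ⟨(mem_filter.mp (hψmem r).1).1, (hψmem r).2⟩

lemma Finset.sum_eq_sum_orderEmbOfFin {M : Type*} [AddCommMonoid M] (A : Finset ℕ) (f : ℕ → M) :
    ∑ i ∈ A, f i = ∑ r, f (A.orderEmbOfFin rfl r) := by
  conv_lhs => rw [← A.map_orderEmbOfFin_univ rfl]
  exact sum_map _ _ _

lemma Finset.sum_extend_mul {ι α K : Type*} [Fintype ι] [DecidableEq α] [CommSemiring K]
    {ψ : ι → α} (hψ : Function.Injective ψ) {A : Finset α} (hA : ∀ r, ψ r ∈ A) (x : ι → K)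
    (g : α → K) : ∑ i ∈ A, Function.extend ψ x 0 i * g i = ∑ r, x r * g (ψ r) := by
  calc ∑ i ∈ A, Function.extend ψ x 0 i * g i
      = ∑ i ∈ univ.image ψ, Function.extend ψ x 0 i * g i := by
        refine (sum_subset (image_subset_iff.mpr fun r _ => hA r) fun i _ hi => ?_).symm
        rw [Function.extend_apply' _ _ _ (by simpa using hi), Pi.zero_apply, zero_mul]
    _ = ∑ r, x r * g (ψ r) := by simp [sum_image hψ.injOn, hψ.extend_apply]

lemma isUnit_bandMatrix {ι K : Type*} [Fintype ι] [LinearOrder ι] [Field K] [CharZero K]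
    (d : ℕ) {u v : ι → ℕ} (hu : StrictMono u) (hv : StrictMono v)
    (hband : ∀ r, u r ≤ v r ∧ v r ≤ u r + d) : IsUnit (bandMatrix K d u v) := by
  have hmap : bandMatrix K d u v = (Int.castRingHom K).mapMatrix (bandMatrix ℤ d u v) := by
    ext r s
    simp [bandMatrix]
  rw [Matrix.isUnit_iff_isUnit_det, isUnit_iff_ne_zero, hmap, ← RingHom.map_det]
  exact Int.cast_ne_zero.mpr (det_bandMatrix_pos d hu hv hband).ne'

/-- The combinatorics of the `x`-exponents of the monomial bases of two graded pieces of `I/J`: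
`B ⊆ [c₀, c₁]` contains every point of `[c₀, c₁]` reachable from `A` by a step in `[0, d]`. -/
structure IsBandPair (d c₀ c₁ : ℕ) (A B : Finset ℕ) : Prop where
  subset_Icc : B ⊆ Icc c₀ c₁
  le_add : ∀ i ∈ A, c₀ ≤ i + d
  le_right : ∀ i ∈ A, i ≤ c₁
  mem : ∀ i ∈ A, ∀ j ∈ Icc c₀ c₁, i ≤ j → j ≤ i + d → j ∈ B

namespace IsBandPair

variable {d c₀ c₁ : ℕ} {A B : Finset ℕ} {K : Type*} [Field K] [CharZero K]

lemma card_filter_le (h : IsBandPair d c₀ c₁ A B) (hcard : #B ≤ #A) {w₀ w₁ : ℕ}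
    (hw₀ : w₀ ∈ B) (hw₁ : w₁ ∈ B) (hw : w₀ ≤ w₁) :
    #(B.filter fun j => w₀ ≤ j ∧ j ≤ w₁) ≤ #(A.filter fun i => w₀ - d ≤ i ∧ i ≤ w₁) := by
  have hw₀' := mem_Icc.mp (h.subset_Icc hw₀)
  have hw₁' := mem_Icc.mp (h.subset_Icc hw₁)
  -- points of `A` left of the window `[w₀ - d, w₁]` inject into `B` left of `w₀`,
  -- and points right of it into `B` right of `w₁`
  have hlow : #(A.filter (· + d < w₀)) ≤ #(B.filter (· < w₀)) := by
    refine card_le_card_of_injOn (· + d) (fun i hi => ?_) (add_left_injective d).injOn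
    simp only [coe_filter, Set.mem_ofPred_eq] at hi ⊢
    obtain ⟨hiA, hi⟩ := hi
    exact ⟨h.mem i hiA _ (mem_Icc.mpr ⟨h.le_add i hiA, by omega⟩) le_self_add
      le_rfl, hi⟩
  have hhigh : #(A.filter (w₁ < ·)) ≤ #(B.filter (w₁ < ·)) := by
    refine card_le_card fun i hi => ?_
    obtain ⟨hiA, hi⟩ := mem_filter.mp hi
    exact mem_filter.mpr ⟨h.mem i hiA i (mem_Icc.mpr ⟨by omega, h.le_right i hiA⟩) le_rfl
      le_self_add, hi⟩
  have hA : #A ≤ #(A.filter (· + d < w₀)) + #(A.filter (w₁ < ·)) +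
      #(A.filter fun i => w₀ - d ≤ i ∧ i ≤ w₁) := by
    simp only [card_filter, card_eq_sum_ones A, ← sum_add_distrib]
    exact sum_le_sum fun i _ => by split_ifs <;> omega
  have hB : #(B.filter (· < w₀)) + #(B.filter (w₁ < ·)) +
      #(B.filter fun j => w₀ ≤ j ∧ j ≤ w₁) ≤ #B := by
    simp only [card_filter, card_eq_sum_ones B, ← sum_add_distrib]
    exact sum_le_sum fun i _ => by split_ifs <;> omega
  omega

lemma hall_condition (h : IsBandPair d c₀ c₁ A B) (hcard : #B ≤ #A) {n : ℕ} (v : Fin n ↪o ℕ)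
    (hv : ∀ r, v r ∈ B) (r s : Fin n) (hrs : r ≤ s) :
    (s - r : ℕ) + 1 ≤ #(A.filter fun i => v r - d ≤ i ∧ i ≤ v s) := by
  have hsub : (Icc r s).image v ⊆ B.filter fun j => v r ≤ j ∧ j ≤ v s :=
    image_subset_iff.mpr fun x hx =>
      mem_filter.mpr ⟨hv x, v.monotone (mem_Icc.mp hx).1, v.monotone (mem_Icc.mp hx).2⟩
  have := card_le_card hsub
  rw [card_image_of_injective _ v.injective, Fin.card_Icc] at this
  have := h.card_filter_le hcard (hv r) (hv s) (v.monotone hrs)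
  omega

lemma eq_zero_of_sum_eq_zero (h : IsBandPair d c₀ c₁ A B) (hcard : #A ≤ #B) {c : ℕ → K}
    (hc : ∀ j ∈ B, ∑ i ∈ A, c i * bandEntry d i j = 0) : ∀ i ∈ A, c i = 0 := by
  set u := A.orderEmbOfFin rfl
  have huA : ∀ r, u r ∈ A := A.orderEmbOfFin_mem rfl
  have hB : #B ≤ c₁ + 1 - c₀ := by simpa using card_le_card h.subset_Icc
  -- match the `r`-th point of `A` with the `r`-th point of `[c₀, c₁]` if that is not below it
  set φ : Fin #A → ℕ := fun r => max (u r) (c₀ + r)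
  have hφ : StrictMono φ := fun r s hrs => max_lt_max (u.strictMono hrs) (by simpa using hrs)
  have hband : ∀ r, u r ≤ φ r ∧ φ r ≤ u r + d := by
    intro r
    have := u.strictMono.apply_zero_add_le r
    have := h.le_add _ (huA ⟨0, r.pos⟩)
    exact ⟨le_max_left _ _, max_le (by omega) (by omega)⟩
  have hφB : ∀ r, φ r ∈ B := by
    intro r
    have := h.le_right _ (huA r)
    exact h.mem _ (huA r) _ (mem_Icc.mpr ⟨le_max_of_le_right le_self_add,
      max_le this (by omega)⟩) (hband r).1 (hband r).2
  have hzero :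
      Matrix.vecMul (c ∘ u) (bandMatrix K d u φ) = Matrix.vecMul 0 (bandMatrix K d u φ) := by
    ext s
    simpa [Matrix.vecMul, dotProduct, bandMatrix, sum_eq_sum_orderEmbOfFin] using hc _ (hφB s)
  have hcu := Matrix.vecMul_injective_iff_isUnit.mpr (isUnit_bandMatrix d u.strictMono hφ hband)
    hzero
  intro i hi
  obtain ⟨r, rfl⟩ : i ∈ Set.range u := by rwa [range_orderEmbOfFin]
  exact congrFun hcu r

lemma exists_sum_eq (h : IsBandPair d c₀ c₁ A B) (hcard : #B ≤ #A) (w : ℕ → K) :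
    ∃ c : ℕ → K, ∀ j ∈ B, ∑ i ∈ A, c i * bandEntry d i j = w j := by
  set v := B.orderEmbOfFin rfl
  obtain ⟨ψ, hψ, hψA⟩ := exists_strictMono_of_hall A (fun r => v r - d) v
    (h.hall_condition hcard v (B.orderEmbOfFin_mem rfl))
  obtain ⟨x, hx⟩ := Matrix.vecMul_surjective_iff_isUnit.mpr
    (isUnit_bandMatrix d hψ v.strictMono fun r => by have := hψA r; omega) (w ∘ v)
  refine ⟨Function.extend ψ x 0, fun j hj => ?_⟩
  obtain ⟨s, rfl⟩ : j ∈ Set.range v := by rwa [range_orderEmbOfFin]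
  rw [sum_extend_mul hψ.injective fun r => (hψA r).1]
  simpa [Matrix.vecMul, dotProduct, bandMatrix] using congrFun hx s

end IsBandPair

noncomputable def xyExp (i j : ℕ) : Fin 2 →₀ ℕ := Finsupp.single 0 i + Finsupp.single 1 j

@[simp] lemma xyExp_apply_zero (i j : ℕ) : xyExp i j 0 = i := by simp [xyExp]

@[simp] lemma xyExp_apply_one (i j : ℕ) : xyExp i j 1 = j := by simp [xyExp]

lemma xyExp_eq_iff {i j : ℕ} {e : Fin 2 →₀ ℕ} : xyExp i j = e ↔ i = e 0 ∧ j = e 1 := by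
  simp [Finsupp.ext_iff, Fin.forall_fin_two]

lemma xyExp_le_iff {i j : ℕ} {e : Fin 2 →₀ ℕ} : xyExp i j ≤ e ↔ i ≤ e 0 ∧ j ≤ e 1 := by
  simp [Finsupp.le_def, Fin.forall_fin_two]

lemma xyExp_add (i j i' j' : ℕ) : xyExp i j + xyExp i' j' = xyExp (i + i') (j + j') := by
  ext x
  fin_cases x <;> simp [xyExp]

lemma degree_fin_two (e : Fin 2 →₀ ℕ) : e.degree = e 0 + e 1 := by
  rw [Finsupp.degree_eq_sum, Fin.sum_univ_two]

section Polynomial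

variable {k : Type} [Field k]

lemma mem_span_X_pow_pair_iff {a b : ℕ} {p : MvPolynomial (Fin 2) k} :
    p ∈ Ideal.span {(X 0 : MvPolynomial (Fin 2) k) ^ a, X 1 ^ b} ↔
      ∀ e : Fin 2 →₀ ℕ, e 0 < a → e 1 < b → coeff e p = 0 := by
  have himage : {(X 0 : MvPolynomial (Fin 2) k) ^ a, X 1 ^ b} =
      (fun e => monomial e (1 : k)) '' {Finsupp.single 0 a, Finsupp.single 1 b} := by
    simp [Set.image_pair, X_pow_eq_monomial]
  rw [himage, mem_ideal_span_monomial_image]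
  simp only [mem_support_iff, Set.mem_insert_iff, Set.mem_singleton_iff, exists_eq_or_imp,
    exists_eq_left, Finsupp.single_le_iff]
  refine forall_congr' fun e => ⟨fun h h0 h1 => ?_, fun h hc => ?_⟩
  · by_contra hc
    have := h hc
    omega
  · by_contra! hlt
    exact hc (h hlt.1 hlt.2)

lemma IsMonomialIdeal.monomial_mem {n : ℕ} {I : Ideal (MvPolynomial (Fin n) k)}
    (hI : IsMonomialIdeal I) {p : MvPolynomial (Fin n) k} (hp : p ∈ I) {e : Fin n →₀ ℕ}
    (he : coeff e p ≠ 0) (c : k) : monomial e c ∈ I := by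
  obtain ⟨T, rfl⟩ := hI
  rw [mem_ideal_span_monomial_image] at hp ⊢
  intro e' he'
  rw [Finset.mem_singleton.mp (support_monomial_subset he')]
  exact hp e (mem_support_iff.mpr he)

lemma mem_gradedPiece_iff {n : ℕ} {J I : Ideal (MvPolynomial (Fin n) k)} {t : ℕ}
    {m : MvPolynomial (Fin n) k ⧸ J} :
    m ∈ gradedPiece J I t ↔ ∃ p ∈ I, p.IsHomogeneous t ∧ Ideal.Quotient.mk J p = m := by
  simp [gradedPiece, Submodule.mem_inf, mem_homogeneousSubmodule, and_assoc]

open Classical in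
/-- The `x`-exponents `i` of the monomials `x ^ i * y ^ (t - i)` that form a basis of the
degree-`t` piece of `I / (x ^ a, y ^ b)`. -/
noncomputable def basisIndices (I : Ideal (MvPolynomial (Fin 2) k)) (a b t : ℕ) : Finset ℕ :=
  (Finset.range a).filter fun i => i ≤ t ∧ t - i < b ∧ monomial (xyExp i (t - i)) (1 : k) ∈ I

lemma mem_basisIndices {I : Ideal (MvPolynomial (Fin 2) k)} {a b t i : ℕ} :
    i ∈ basisIndices I a b t ↔
      i < a ∧ i ≤ t ∧ t - i < b ∧ monomial (xyExp i (t - i)) (1 : k) ∈ I := by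
  simp [basisIndices]

noncomputable def binaryForm (t : ℕ) (A : Finset ℕ) (c : ℕ → k) : MvPolynomial (Fin 2) k :=
  ∑ i ∈ A, monomial (xyExp i (t - i)) (c i)

lemma coeff_binaryForm {t : ℕ} {A : Finset ℕ} (hA : ∀ i ∈ A, i ≤ t) (c : ℕ → k)
    (e : Fin 2 →₀ ℕ) :
    coeff e (binaryForm t A c) = if e 0 + e 1 = t ∧ e 0 ∈ A then c (e 0) else 0 := by
  simp only [binaryForm, coeff_sum, coeff_monomial, xyExp_eq_iff]
  split_ifs with he
  · rw [sum_eq_single_of_mem (e 0) he.2 fun i _ hi => if_neg fun h => hi h.1, if_pos]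
    omega
  · refine sum_eq_zero fun i hi => if_neg fun (h : i = e 0 ∧ t - i = e 1) => he ⟨?_, h.1 ▸ hi⟩
    have := hA i hi
    omega

lemma isHomogeneous_binaryForm {t : ℕ} {A : Finset ℕ} (hA : ∀ i ∈ A, i ≤ t) (c : ℕ → k) :
    (binaryForm t A c).IsHomogeneous t :=
  IsHomogeneous.sum _ _ _ fun i hi => isHomogeneous_monomial _ (by
    rw [degree_fin_two, xyExp_apply_zero, xyExp_apply_one]
    have := hA i hi
    omega)

lemma coeff_pow_mul_monomial (d : ℕ) {t i : ℕ} (hi : i ≤ t) (c : k) (e : Fin 2 →₀ ℕ) :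
    coeff e ((X 0 + X 1) ^ d * monomial (xyExp i (t - i)) c) =
      if e 0 + e 1 = t + d then c * bandEntry d i (e 0) else 0 := by
  rw [mul_comm, coeff_monomial_mul', coeff_add_pow]
  simp only [xyExp_le_iff, HasAntidiagonal.mem_antidiagonal, Finsupp.tsub_apply, xyExp_apply_zero,
    xyExp_apply_one, bandEntry]
  split_ifs <;> first | rfl | (exfalso; omega) |
    (rw [Nat.choose_eq_zero_of_lt (by omega)]; simp) | simp

lemma coeff_pow_mul_binaryForm (d : ℕ) {t : ℕ} {A : Finset ℕ} (hA : ∀ i ∈ A, i ≤ t)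
    (c : ℕ → k) (e : Fin 2 →₀ ℕ) :
    coeff e ((X 0 + X 1) ^ d * binaryForm t A c) =
      if e 0 + e 1 = t + d then ∑ i ∈ A, c i * bandEntry d i (e 0) else 0 := by
  rw [binaryForm, mul_sum, coeff_sum,
    sum_congr rfl fun i hi => coeff_pow_mul_monomial d (hA i hi) (c i) e]
  split_ifs <;> simp

variable {I : Ideal (MvPolynomial (Fin 2) k)} {a b t : ℕ}

lemma le_of_mem_basisIndices {i : ℕ} (hi : i ∈ basisIndices I a b t) : i ≤ t :=
  (mem_basisIndices.mp hi).2.1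

lemma binaryForm_mem (c : ℕ → k) : binaryForm t (basisIndices I a b t) c ∈ I := by
  refine sum_mem fun i hi => ?_
  simpa [C_mul_monomial] using I.mul_mem_left (C (c i)) (mem_basisIndices.mp hi).2.2.2

lemma mem_basisIndices_add {d i j : ℕ} (hi : i ∈ basisIndices I a b t) (hij : i ≤ j)
    (hji : j ≤ i + d) (hja : j < a) (hjb : t + d - j < b) :
    j ∈ basisIndices I a b (t + d) := by
  obtain ⟨-, hit, -, hmem⟩ := mem_basisIndices.mp hi
  refine mem_basisIndices.mpr ⟨hja, by omega, hjb, ?_⟩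
  have := I.mul_mem_right (monomial (xyExp (j - i) (t + d - j - (t - i))) (1 : k)) hmem
  rwa [monomial_mul, one_mul, xyExp_add, show i + (j - i) = j by omega,
    show t - i + (t + d - j - (t - i)) = t + d - j by omega] at this

lemma isBandPair_basisIndices (d : ℕ) :
    IsBandPair d (t + d + 1 - b) (min (a - 1) (t + d)) (basisIndices I a b t)
      (basisIndices I a b (t + d)) where
  subset_Icc j hj := by
    have := mem_basisIndices.mp hj
    exact mem_Icc.mpr (by omega)
  le_add i hi := by
    have := mem_basisIndices.mp hi
    omega
  le_right i hi := by
    have := mem_basisIndices.mp hi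
    omega
  mem i hi j hj hij hji := by
    have := mem_basisIndices.mp hi
    have := mem_Icc.mp hj
    exact mem_basisIndices_add hi hij hji (by omega) (by omega)

lemma mk_binaryForm_eq_zero_iff {c : ℕ → k} :
    Ideal.Quotient.mk (Ideal.span {(X 0 : MvPolynomial (Fin 2) k) ^ a, X 1 ^ b})
        (binaryForm t (basisIndices I a b t) c) = 0 ↔ ∀ i ∈ basisIndices I a b t, c i = 0 := by
  refine ⟨fun h i hi => ?_, fun h => ?_⟩
  · obtain ⟨hia, hit, hib, -⟩ := mem_basisIndices.mp hi
    rw [Ideal.Quotient.eq_zero_iff_mem, mem_span_X_pow_pair_iff] at h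
    have := h (xyExp i (t - i)) (by simpa using hia) (by simpa using hib)
    rwa [coeff_binaryForm (fun _ => le_of_mem_basisIndices), xyExp_apply_zero, xyExp_apply_one,
      if_pos ⟨by omega, hi⟩] at this
  · rw [binaryForm, sum_eq_zero fun i hi => by rw [h i hi, monomial_zero], map_zero]

lemma exists_binaryForm_of_mem_gradedPiece (hI : IsMonomialIdeal I)
    {m : MvPolynomial (Fin 2) k ⧸ Ideal.span {(X 0 : MvPolynomial (Fin 2) k) ^ a, X 1 ^ b}}
    (hm : m ∈ gradedPiece (Ideal.span {(X 0 : MvPolynomial (Fin 2) k) ^ a, X 1 ^ b}) I t) :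
    ∃ c : ℕ → k, Ideal.Quotient.mk (Ideal.span {(X 0 : MvPolynomial (Fin 2) k) ^ a, X 1 ^ b})
      (binaryForm t (basisIndices I a b t) c) = m := by
  obtain ⟨p, hpI, hp, rfl⟩ := mem_gradedPiece_iff.mp hm
  refine ⟨fun i => coeff (xyExp i (t - i)) p, Ideal.Quotient.eq.mpr ?_⟩
  rw [mem_span_X_pow_pair_iff]
  intro e ha hb
  rw [coeff_sub, coeff_binaryForm (fun _ => le_of_mem_basisIndices), sub_eq_zero]
  by_cases hdeg : e 0 + e 1 = t
  · have he : xyExp (e 0) (t - e 0) = e := xyExp_eq_iff.mpr ⟨rfl, by omega⟩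
    split_ifs with hmem
    · rw [he]
    · by_contra hne
      refine hmem ⟨hdeg, mem_basisIndices.mpr ⟨ha, by omega, by omega, ?_⟩⟩
      rw [he]
      exact hI.monomial_mem hpI (Ne.symm hne) 1
  · rw [if_neg fun h => hdeg h.1, hp.coeff_eq_zero (by rwa [degree_fin_two])]

lemma mk_pow_mul_binaryForm (d : ℕ) (c : ℕ → k) :
    Ideal.Quotient.mk (Ideal.span {(X 0 : MvPolynomial (Fin 2) k) ^ a, X 1 ^ b})
        ((X 0 + X 1) ^ d * binaryForm t (basisIndices I a b t) c) =
      Ideal.Quotient.mk (Ideal.span {(X 0 : MvPolynomial (Fin 2) k) ^ a, X 1 ^ b})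
        (binaryForm (t + d) (basisIndices I a b (t + d))
          fun j => ∑ i ∈ basisIndices I a b t, c i * bandEntry d i j) := by
  refine Ideal.Quotient.eq.mpr (mem_span_X_pow_pair_iff.mpr fun e ha hb => ?_)
  rw [coeff_sub, coeff_pow_mul_binaryForm d (fun _ => le_of_mem_basisIndices),
    coeff_binaryForm (fun _ => le_of_mem_basisIndices), sub_eq_zero]
  by_cases hdeg : e 0 + e 1 = t + d
  · rw [if_pos hdeg]
    split_ifs with hmem
    · rfl
    · refine sum_eq_zero fun i hi => ?_
      by_cases hband : i ≤ e 0 ∧ e 0 ≤ i + d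
      · exact absurd ⟨hdeg, mem_basisIndices_add hi hband.1 hband.2 ha (by omega)⟩ hmem
      · simp [bandEntry_eq_zero hband]
  · rw [if_neg hdeg, if_neg fun h => hdeg h.1]

lemma binaryForm_mem_gradedPiece (c : ℕ → k) :
    Ideal.Quotient.mk (Ideal.span {(X 0 : MvPolynomial (Fin 2) k) ^ a, X 1 ^ b})
        (binaryForm t (basisIndices I a b t) c) ∈
      gradedPiece (Ideal.span {(X 0 : MvPolynomial (Fin 2) k) ^ a, X 1 ^ b}) I t :=
  mem_gradedPiece_iff.mpr
    ⟨_, binaryForm_mem c, isHomogeneous_binaryForm (fun _ => le_of_mem_basisIndices) c, rfl⟩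

variable [CharZero k]

lemma mul_pow_injective_of_card_le (hI : IsMonomialIdeal I) {d : ℕ}
    (hcard : #(basisIndices I a b t) ≤ #(basisIndices I a b (t + d))) :
    ∀ m ∈ gradedPiece (Ideal.span {(X 0 : MvPolynomial (Fin 2) k) ^ a, X 1 ^ b}) I t,
      Ideal.Quotient.mk (Ideal.span {(X 0 : MvPolynomial (Fin 2) k) ^ a, X 1 ^ b})
        ((X 0 + X 1) ^ d) * m = 0 → m = 0 := by
  intro m hm hm0
  obtain ⟨c, rfl⟩ := exists_binaryForm_of_mem_gradedPiece hI hm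
  rw [← map_mul, mk_pow_mul_binaryForm, mk_binaryForm_eq_zero_iff] at hm0
  exact mk_binaryForm_eq_zero_iff.mpr
    ((isBandPair_basisIndices d).eq_zero_of_sum_eq_zero hcard hm0)

lemma mul_pow_surjective_of_card_le (hI : IsMonomialIdeal I) {d : ℕ}
    (hcard : #(basisIndices I a b (t + d)) ≤ #(basisIndices I a b t)) :
    ∀ m' ∈ gradedPiece (Ideal.span {(X 0 : MvPolynomial (Fin 2) k) ^ a, X 1 ^ b}) I (t + d),
      ∃ m ∈ gradedPiece (Ideal.span {(X 0 : MvPolynomial (Fin 2) k) ^ a, X 1 ^ b}) I t,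
        Ideal.Quotient.mk (Ideal.span {(X 0 : MvPolynomial (Fin 2) k) ^ a, X 1 ^ b})
          ((X 0 + X 1) ^ d) * m = m' := by
  intro m' hm'
  obtain ⟨w, rfl⟩ := exists_binaryForm_of_mem_gradedPiece hI hm'
  obtain ⟨c, hc⟩ := (isBandPair_basisIndices d).exists_sum_eq hcard w
  refine ⟨_, binaryForm_mem_gradedPiece c, ?_⟩
  rw [← map_mul, mk_pow_mul_binaryForm]
  exact congrArg _ (sum_congr rfl fun j hj => congrArg _ (hc j hj))

end Polynomial

theorem stmt0_general {k : Type} [Field k] [CharZero k] (a b : ℕ)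
    (I : Ideal (MvPolynomial (Fin 2) k)) (hI : IsMonomialIdeal I) :
    IsSLE (Ideal.span {(X 0 : MvPolynomial (Fin 2) k) ^ a, X 1 ^ b}) I (X 0 + X 1) := by
  intro d _ t
  rcases le_total #(basisIndices I a b t) #(basisIndices I a b (t + d)) with hcard | hcard
  · exact Or.inl (mul_pow_injective_of_card_le hI hcard)
  · exact Or.inr (mul_pow_surjective_of_card_le hI hcard)

/-- **Theorem (main module theorem).** Let `k` be a field of characteristic zero,
`S = k[x,y]`, `J = (x^a, y^b)` with `a, b ≥ 1`, and `I` a monomial ideal with `J ⊆ I` and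
`I/J ≠ 0`. Then `x + y` is a strong Lefschetz element for the graded `S`-module `I/J`;
in particular `I/J` has the strong Lefschetz property. -/
theorem stmt0 {k : Type} [Field k] [CharZero k] (a b : ℕ) (ha : 0 < a) (hb : 0 < b)
    (I : Ideal (MvPolynomial (Fin 2) k)) (hI : IsMonomialIdeal I)
    (hJI : Ideal.span {(X 0 : MvPolynomial (Fin 2) k) ^ a, X 1 ^ b} ≤ I)
    (hne : I ≠ Ideal.span {(X 0 : MvPolynomial (Fin 2) k) ^ a, X 1 ^ b}) :
    IsSLE (Ideal.span {(X 0 : MvPolynomial (Fin 2) k) ^ a, X 1 ^ b}) I (X 0 + X 1) :=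
  stmt0_general a b I hI
end

section
/- Let a_1 < a_2 < ⋯ < a_m be nonnegative integers and b_1 < b_2 < ⋯ < b_m be integers, and let M = (m_{ij}) be the m × m matrix with entries m_{ij} = C(a_i, b_j), where the binomial coefficient C(a, b) is taken to be 0 when b < 0 or b > a. Then det(M) ≥ 0, and det(M) > 0 if and only if 0 ≤ b_i ≤ a_i for every i. -/
/-- The `m × m` matrix of binomial coefficients `C(aᵢ, bⱼ)` over `ℚ`, with the convention
that `C(a, b) = 0` whenever `b < 0` (and automatically `C(a, b) = 0` when `b > a`). -/
noncomputable def binomMatrix (m : ℕ) (a : Fin m → ℕ) (b : Fin m → ℤ) :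
    Matrix (Fin m) (Fin m) ℚ :=
  Matrix.of fun i j => if 0 ≤ b j then ((a i).choose (b j).toNat : ℚ) else 0

/-! Pascal's rule `C(a + 1, b) = C(a, b) + C(a, b - 1)`, applied to every column, expands the
determinant by multilinearity into a sum of determinants of the same shape, with every `aᵢ`
lowered by one and each `bⱼ` possibly lowered by one. The lowered column data stays weakly
increasing, so each summand either has two equal columns or is nonnegative by induction, and when
`0 ≤ bᵢ ≤ aᵢ` one suitable choice of lowerings keeps that condition, giving a positive summand.
The induction bottoms out at `a₁ = 0`, where `b₁ = 0` and the first row is `(1, 0, …, 0)`.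

Conversely, if `bᵢ < 0` the `i`-th column vanishes, and if `bᵢ > aᵢ` every entry in a row `≤ i`
and a column `≥ i` vanishes: a zero block of size `i × (m - i + 1)` that no permutation avoids. -/

open Matrix

def intChoose (n : ℕ) (k : ℤ) : ℚ := if 0 ≤ k then (n.choose k.toNat : ℚ) else 0

lemma intChoose_of_neg {n : ℕ} {k : ℤ} (hk : k < 0) : intChoose n k = 0 := by
  simp [intChoose, hk.not_ge]

lemma intChoose_of_lt {n : ℕ} {k : ℤ} (hk : (n : ℤ) < k) : intChoose n k = 0 := by
  rw [intChoose, if_pos (by omega), Nat.choose_eq_zero_of_lt (by omega), Nat.cast_zero]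

lemma intChoose_zero_left (k : ℤ) : intChoose 0 k = if k = 0 then 1 else 0 := by
  rcases lt_trichotomy k 0 with hk | rfl | hk
  · rw [intChoose_of_neg hk, if_neg hk.ne]
  · simp [intChoose]
  · rw [intChoose_of_lt (by simpa using hk), if_neg hk.ne']

lemma intChoose_succ (n : ℕ) (k : ℤ) :
    intChoose (n + 1) k = intChoose n k + intChoose n (k - 1) := by
  rcases lt_or_ge k 0 with hk | hk
  · rw [intChoose_of_neg hk, intChoose_of_neg hk, intChoose_of_neg (by omega), add_zero]
  obtain ⟨k, rfl⟩ := Int.eq_ofNat_of_zero_le hk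
  cases k with
  | zero => simp [intChoose]
  | succ k =>
    rw [intChoose, intChoose, intChoose, if_pos hk, if_pos hk, if_pos (by omega)]
    simp [Nat.choose_succ_succ', add_comm]

lemma binomMatrix_apply (m : ℕ) (a : Fin m → ℕ) (b : Fin m → ℤ) (i j : Fin m) :
    binomMatrix m a b i j = intChoose (a i) (b j) := rfl

theorem Matrix.det_eq_zero_of_corner_eq_zero {R : Type*} [CommRing R] {m : ℕ}
    {M : Matrix (Fin m) (Fin m) R} (k : Fin m) (h : ∀ i j, i ≤ k → k ≤ j → M i j = 0) :
    M.det = 0 := by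
  rw [det_apply]
  refine Finset.sum_eq_zero fun σ _ => ?_
  obtain ⟨j, hkj, hjk⟩ : ∃ j, k ≤ j ∧ σ j ≤ k := by
    by_contra! hσ
    have hmaps : Set.MapsTo σ (Finset.Ici k) (Finset.Ioi k) := fun j hj =>
      Finset.mem_Ioi.2 (hσ j (Finset.mem_Ici.1 hj))
    have := Finset.card_le_card_of_injOn σ hmaps σ.injective.injOn
    simp only [Fin.card_Ici, Fin.card_Ioi] at this
    omega
  rw [Finset.prod_eq_zero (f := fun i => M (σ i) i) (Finset.mem_univ j) (h _ _ hjk hkj), smul_zero]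

theorem det_binomMatrix_eq_zero {m : ℕ} {a : Fin m → ℕ} {b : Fin m → ℤ} (ha : Monotone a)
    (hb : Monotone b) (hab : ¬∀ i, 0 ≤ b i ∧ b i ≤ a i) : (binomMatrix m a b).det = 0 := by
  push Not at hab
  obtain ⟨k, hk⟩ := hab
  rcases lt_or_ge (b k) 0 with hneg | hnonneg
  · exact det_eq_zero_of_column_eq_zero k fun i => intChoose_of_neg hneg
  · refine det_eq_zero_of_corner_eq_zero k fun i j hik hkj => intChoose_of_lt ?_
    have := ha hik
    have := hb hkj
    have := hk hnonneg
    omega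

theorem det_binomMatrix_succ_of_zero {m : ℕ} {a : Fin (m + 1) → ℕ} {b : Fin (m + 1) → ℤ}
    (ha : a 0 = 0) (hb : b 0 = 0) (hb' : ∀ j : Fin m, b j.succ ≠ 0) :
    (binomMatrix (m + 1) a b).det = (binomMatrix m (a ∘ Fin.succ) (b ∘ Fin.succ)).det := by
  rw [det_succ_row_zero, Fin.sum_univ_succ, Finset.sum_eq_zero fun j _ => ?_]
  · have hminor : (binomMatrix (m + 1) a b).submatrix Fin.succ Fin.succ =
        binomMatrix m (a ∘ Fin.succ) (b ∘ Fin.succ) := rfl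
    simp [binomMatrix_apply, ha, hb, intChoose_zero_left, hminor]
  · simp [binomMatrix_apply, ha, intChoose_zero_left, hb' j]

theorem det_binomMatrix_succ_left {m : ℕ} (a : Fin m → ℕ) (b : Fin m → ℤ) :
    (binomMatrix m (fun i => a i + 1) b).det =
      ∑ r : Fin m → Bool, (binomMatrix m a fun j => if r j then b j - 1 else b j).det := by
  rw [← det_transpose]
  have hrows : (binomMatrix m (fun i => a i + 1) b)ᵀ =
      fun j => ∑ t : Bool, fun i => intChoose (a i) (if t then b j - 1 else b j) := by
    ext j i
    simp [binomMatrix_apply, intChoose_succ, add_comm]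
  rw [hrows]
  refine (detRowAlternating.toMultilinearMap.map_sum _).trans ?_
  refine Finset.sum_congr rfl fun r _ => ?_
  rw [← det_transpose (binomMatrix _ _ _)]
  rfl

theorem StrictMono.monotone_ite_sub_one {ι : Type*} [PartialOrder ι] {b : ι → ℤ}
    (hb : StrictMono b) (r : ι → Bool) : Monotone fun j => if r j then b j - 1 else b j := by
  intro i j hij
  rcases hij.lt_or_eq with hlt | rfl
  · have := hb hlt
    dsimp only
    split_ifs <;> omega
  · exact le_rfl

theorem Fin.le_of_strictMono_of_nonneg {m : ℕ} {f : Fin m → ℤ} (hf : StrictMono f)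
    (h0 : ∀ i, 0 ≤ f i) (j : Fin m) : (j : ℤ) ≤ f j := by
  obtain ⟨j, hj⟩ := j
  induction j with
  | zero => exact h0 _
  | succ j ih =>
    have := hf (show (⟨j, by omega⟩ : Fin m) < ⟨j + 1, hj⟩ from Nat.lt_succ_self j)
    have := ih (by omega)
    push_cast at *
    omega

theorem det_binomMatrix_nonneg_of_forall_pos {m : ℕ} {a : Fin m → ℕ}
    (hpos : ∀ b : Fin m → ℤ, StrictMono b → (∀ i, 0 ≤ b i ∧ b i ≤ a i) →
      0 < (binomMatrix m a b).det)
    (ha : Monotone a) {b : Fin m → ℤ} (hb : Monotone b) : 0 ≤ (binomMatrix m a b).det := by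
  by_cases hinj : Function.Injective b
  · by_cases hab : ∀ i, 0 ≤ b i ∧ b i ≤ a i
    · exact (hpos b (hb.strictMono_of_injective hinj) hab).le
    · exact (det_binomMatrix_eq_zero ha hb hab).ge
  · obtain ⟨i, j, hij, hne⟩ : ∃ i j, b i = b j ∧ i ≠ j := by
      simpa [Function.Injective] using hinj
    exact (det_zero_of_column_eq hne fun k => by simp [binomMatrix_apply, hij]).ge

theorem det_binomMatrix_succ_left_pos {m : ℕ} {a : Fin m → ℕ}
    (hpos : ∀ b : Fin m → ℤ, StrictMono b → (∀ i, 0 ≤ b i ∧ b i ≤ a i) →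
      0 < (binomMatrix m a b).det)
    (ha : StrictMono a) {b : Fin m → ℤ} (hb : StrictMono b)
    (hab : ∀ i, 0 ≤ b i ∧ b i ≤ a i + 1) :
    0 < (binomMatrix m (fun i => a i + 1) b).det := by
  rw [det_binomMatrix_succ_left]
  have hterm (r : Fin m → Bool) :
      0 ≤ (binomMatrix m a fun j => if r j then b j - 1 else b j).det :=
    det_binomMatrix_nonneg_of_forall_pos hpos ha.monotone (hb.monotone_ite_sub_one r)
  -- Lower `bⱼ` exactly when `j < bⱼ`: since `j ≤ bⱼ` and `j ≤ aⱼ`, the lowered data still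
  -- satisfies the positivity condition for `a` and is still strictly increasing.
  refine Finset.sum_pos' (fun r _ => hterm r) ⟨fun j => (j : ℤ) < b j, Finset.mem_univ _, ?_⟩
  have hjb := Fin.le_of_strictMono_of_nonneg hb fun i => (hab i).1
  have hja := Fin.le_of_strictMono_of_nonneg (f := fun i => (a i : ℤ))
    (fun _ _ hij => Nat.cast_lt.2 (ha hij)) fun i => by positivity
  refine hpos _ (fun i j hij => ?_) fun j => ?_
  · have := hb hij
    have := hjb i
    have := hjb j
    have : (i : ℤ) < j := by exact_mod_cast hij
    simp only [decide_eq_true_eq]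
    split_ifs <;> omega
  · have := hab j
    have := hja j
    simp only [decide_eq_true_eq]
    split_ifs <;> omega

theorem det_binomMatrix_pos {m : ℕ} {a : Fin m → ℕ} {b : Fin m → ℤ} (ha : StrictMono a)
    (hb : StrictMono b) (hab : ∀ i, 0 ≤ b i ∧ b i ≤ a i) : 0 < (binomMatrix m a b).det := by
  induction m with
  | zero => simp
  | succ m ihm =>
    obtain ⟨n, hn⟩ : ∃ n, a 0 = n := ⟨_, rfl⟩
    induction n generalizing a b with
    | zero =>
      have hb0 : b 0 = 0 := by
        have := hab 0
        omega
      have hb' (j : Fin m) : b j.succ ≠ 0 := (hb0 ▸ hb j.succ_pos).ne'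
      rw [det_binomMatrix_succ_of_zero hn hb0 hb']
      exact ihm (ha.comp Fin.strictMono_succ) (hb.comp Fin.strictMono_succ) fun i => hab i.succ
    | succ n ihn =>
      obtain ⟨a', rfl⟩ : ∃ a' : Fin (m + 1) → ℕ, a = fun i => a' i + 1 := by
        refine ⟨fun i => a i - 1, funext fun i => ?_⟩
        have := ha.monotone (Fin.zero_le i)
        dsimp only
        omega
      have ha' : StrictMono a' := fun i j hij => by simpa using ha hij
      exact det_binomMatrix_succ_left_pos (fun b hb hab => ihn ha' hb hab (by simpa using hn))
        ha' hb hab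

theorem det_binomMatrix_nonneg {m : ℕ} {a : Fin m → ℕ} {b : Fin m → ℤ} (ha : StrictMono a)
    (hb : StrictMono b) : 0 ≤ (binomMatrix m a b).det :=
  det_binomMatrix_nonneg_of_forall_pos (fun _ hb hab => det_binomMatrix_pos ha hb hab)
    ha.monotone hb.monotone

/-- **Corollary (Gessel–Viennot).** Let `a₁ < a₂ < ⋯ < aₘ` be nonnegative integers and
`b₁ < b₂ < ⋯ < bₘ` integers. The determinant of the matrix `(C(aᵢ, bⱼ))` of binomial
coefficients is nonnegative, and it is positive if and only if `0 ≤ bᵢ ≤ aᵢ` for every `i`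
(i.e. `C(aᵢ, bᵢ) ≠ 0` for each `i`). -/
theorem stmt13 (m : ℕ) (a : Fin m → ℕ) (b : Fin m → ℤ)
    (ha : StrictMono a) (hb : StrictMono b) :
    0 ≤ (binomMatrix m a b).det ∧
      (0 < (binomMatrix m a b).det ↔ ∀ i, 0 ≤ b i ∧ b i ≤ (a i : ℤ)) :=
  ⟨det_binomMatrix_nonneg ha hb, fun hpos => not_not.1 fun hab =>
    hpos.ne' (det_binomMatrix_eq_zero ha.monotone hb.monotone hab), det_binomMatrix_pos ha hb⟩
end

section
/- Let k be a field of characteristic zero, S = k[x,y,z], I = (x^2, y^2, z^2) and J = (x^3, y^3, z^3). Then the graded S-module M = I/J satisfies dim_k M_3 = dim_k M_4, and the multiplication map ×(x+y+z) : M_3 → M_4 has nontrivial kernel (it kills the class of x^2(y−z) + y^2(z−x) + z^2(x−y)); consequently M does not have the weak Lefschetz property (and hence not the strong Lefschetz property). -/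
open MvPolynomial

/-- `ℓ` is a weak Lefschetz element for the graded module `I/J`. -/
def IsWLE {k : Type} [Field k] {n : ℕ} (J I : Ideal (MvPolynomial (Fin n) k))
    (ℓ : MvPolynomial (Fin n) k) : Prop :=
  ∀ i : ℕ,
    (∀ m ∈ gradedPiece J I i, Ideal.Quotient.mk J ℓ * m = 0 → m = 0) ∨
    (∀ m' ∈ gradedPiece J I (i + 1), ∃ m ∈ gradedPiece J I i,
      Ideal.Quotient.mk J ℓ * m = m')

/-- The graded module `I/J` has the strong Lefschetz property. -/
def HasSLP {k : Type} [Field k] {n : ℕ} (J I : Ideal (MvPolynomial (Fin n) k)) : Prop :=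
  ∃ ℓ ∈ homogeneousSubmodule (Fin n) k 1, IsSLE J I ℓ

/-- The graded module `I/J` has the weak Lefschetz property. -/
def HasWLP {k : Type} [Field k] {n : ℕ} (J I : Ideal (MvPolynomial (Fin n) k)) : Prop :=
  ∃ ℓ ∈ homogeneousSubmodule (Fin n) k 1, IsWLE J I ℓ

/-!
Both `M₃` and `M₄` have dimension `6`: modulo `J`, the monomials of degree `i` in `I` with all
exponents below `3` form a basis of `Mᵢ`. Given a linear form `ℓ = aX + bY + cZ`, put
`G = abXY + bcYZ + caZX - a²X² - b²Y² - c²Z²`. Then `ℓ G = 3abc·XYZ - a³X³ - b³Y³ - c³Z³`,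
and `XYZ · I ⊆ J`, so `G` kills `ℓ · M₃`. On the other hand `G X²Y² ≡ -c² X²Y²Z²` modulo `J`,
and similarly for `X²Z²` and `Y²Z²`, while the socle monomial `X²Y²Z²` is not in `J`. Hence
`ℓ · M₃ = M₄` forces `ℓ = 0`, impossible as `M₄ ≠ 0`; and as `dim M₃ = dim M₄`, `×ℓ` is not
injective either.
-/

noncomputable def exponentsOfFin {σ : Type*} [Finite σ] {e : ℕ} (f : σ → Fin e) : σ →₀ ℕ :=
  Finsupp.equivFunOnFinite.symm fun j => f j

theorem exponentsOfFin_injective {σ : Type*} [Finite σ] {e : ℕ} :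
    Function.Injective (exponentsOfFin (σ := σ) (e := e)) := fun _ _ h =>
  funext fun j => Fin.ext (DFunLike.congr_fun h j)

namespace MvPolynomial

noncomputable def varPowIdeal (σ k : Type*) [CommSemiring k] (e : ℕ) : Ideal (MvPolynomial σ k) :=
  Ideal.span (Set.range fun j => X j ^ e)

section VarPowIdeal

variable {σ k : Type*} [CommSemiring k] {e : ℕ}

theorem mem_varPowIdeal_iff {p : MvPolynomial σ k} :
    p ∈ varPowIdeal σ k e ↔ ∀ m ∈ p.support, ∃ j, e ≤ m j := by
  have hgen : (Set.range fun j => (X j ^ e : MvPolynomial σ k)) =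
      (fun s => monomial s (1 : k)) '' Set.range fun j => Finsupp.single j e := by
    rw [← Set.range_comp]
    congr 1
    funext j
    exact X_pow_eq_monomial
  simp [varPowIdeal, hgen, mem_ideal_span_monomial_image, Finsupp.single_le_iff]

theorem coeff_eq_zero_of_mem_varPowIdeal {p : MvPolynomial σ k} (hp : p ∈ varPowIdeal σ k e)
    {m : σ →₀ ℕ} (hm : ∀ j, m j < e) : coeff m p = 0 := by
  by_contra h
  obtain ⟨j, hj⟩ := mem_varPowIdeal_iff.1 hp m (mem_support_iff.2 h)
  exact (hj.trans_lt (hm j)).false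

theorem monomial_mem_varPowIdeal {m : σ →₀ ℕ} {c : k} (h : ∃ j, e ≤ m j) :
    monomial m c ∈ varPowIdeal σ k e :=
  mem_varPowIdeal_iff.2 fun _ hm' => Finset.mem_singleton.1 (support_monomial_subset hm') ▸ h

theorem monomial_one_mem_varPowIdeal_iff [Nontrivial k] {m : σ →₀ ℕ} :
    monomial m (1 : k) ∈ varPowIdeal σ k e ↔ ∃ j, e ≤ m j := by
  classical
  simp [mem_varPowIdeal_iff, support_monomial]

end VarPowIdeal

theorem mk_monomial {σ k : Type*} [CommRing k] (J : Ideal (MvPolynomial σ k)) (m : σ →₀ ℕ)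
    (c : k) : Ideal.Quotient.mk J (monomial m c) = c • Ideal.Quotient.mk J (monomial m 1) := by
  have h := map_smul (Ideal.Quotient.mkₐ k J) c (monomial m 1)
  rwa [smul_monomial, smul_eq_mul, mul_one] at h

end MvPolynomial

open MvPolynomial

section GradedPiece

variable {k : Type} [Field k] {n : ℕ} {J I : Ideal (MvPolynomial (Fin n) k)} {i d : ℕ}

theorem mk_mem_gradedPiece {p : MvPolynomial (Fin n) k} (hp : p ∈ I) (hpi : p.IsHomogeneous i) :
    Ideal.Quotient.mk J p ∈ gradedPiece J I i :=
  ⟨p, ⟨hp, hpi⟩, rfl⟩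

theorem mul_mem_gradedPiece {ℓ : MvPolynomial (Fin n) k} (hℓ : ℓ.IsHomogeneous d)
    {x : MvPolynomial (Fin n) k ⧸ J} (hx : x ∈ gradedPiece J I i) :
    Ideal.Quotient.mk J ℓ * x ∈ gradedPiece J I (i + d) := by
  obtain ⟨p, ⟨hp, hpi⟩, rfl⟩ := hx
  rw [add_comm]
  exact mk_mem_gradedPiece (I.mul_mem_left ℓ hp) (hℓ.mul hpi)

noncomputable def gradedPieceMul {ℓ : MvPolynomial (Fin n) k} (hℓ : ℓ.IsHomogeneous d) :
    gradedPiece J I i →ₗ[k] gradedPiece J I (i + d) :=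
  (LinearMap.mulLeft k (Ideal.Quotient.mk J ℓ)).restrict fun _ => mul_mem_gradedPiece hℓ

@[simp]
theorem coe_gradedPieceMul {ℓ : MvPolynomial (Fin n) k} (hℓ : ℓ.IsHomogeneous d)
    (x : gradedPiece J I i) :
    (gradedPieceMul hℓ x : MvPolynomial (Fin n) k ⧸ J) = Ideal.Quotient.mk J ℓ * x :=
  rfl

theorem mul_injective_iff_surjective_of_finrank_eq {ℓ : MvPolynomial (Fin n) k}
    (hℓ : ℓ.IsHomogeneous d) [FiniteDimensional k (gradedPiece J I i)]
    [FiniteDimensional k (gradedPiece J I (i + d))]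
    (h : Module.finrank k (gradedPiece J I i) = Module.finrank k (gradedPiece J I (i + d))) :
    (∀ m ∈ gradedPiece J I i, Ideal.Quotient.mk J ℓ * m = 0 → m = 0) ↔
      ∀ m' ∈ gradedPiece J I (i + d), ∃ m ∈ gradedPiece J I i,
        Ideal.Quotient.mk J ℓ * m = m' := by
  have key := LinearMap.injective_iff_surjective_of_finrank_eq_finrank h (f := gradedPieceMul hℓ)
  rw [← LinearMap.ker_eq_bot, LinearMap.ker_eq_bot', Subtype.forall] at key
  simp only [Function.Surjective, Subtype.forall, Subtype.exists, Subtype.ext_iff] at key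
  simpa [← Submodule.coe_eq_zero] using key

open Finset in
/-- The classes of the monomials `∏ⱼ Xⱼ ^ f j` counted on the right form a basis. -/
theorem finrank_gradedPiece_varPowIdeal (d e i : ℕ) :
    Module.finrank k (gradedPiece (varPowIdeal (Fin n) k e) (varPowIdeal (Fin n) k d) i) =
      #{f : Fin n → Fin e | ∑ j, (f j : ℕ) = i ∧ ∃ j, d ≤ (f j : ℕ)} := by
  set T : Finset (Fin n → Fin e) := {f | ∑ j, (f j : ℕ) = i ∧ ∃ j, d ≤ (f j : ℕ)}
  set v : T → MvPolynomial (Fin n) k ⧸ varPowIdeal (Fin n) k e := fun f =>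
    Ideal.Quotient.mk _ (monomial (exponentsOfFin f.1) 1)
  have hspan : Submodule.span k (Set.range v) =
      gradedPiece (varPowIdeal (Fin n) k e) (varPowIdeal (Fin n) k d) i := by
    apply le_antisymm
    · rw [Submodule.span_le]
      rintro _ ⟨⟨f, hf⟩, rfl⟩
      obtain ⟨hdeg, hd⟩ := (Finset.mem_filter.1 hf).2
      refine mk_mem_gradedPiece (monomial_mem_varPowIdeal hd) ?_
      exact isHomogeneous_monomial _ (by rw [Finsupp.degree_eq_sum]; exact hdeg)
    · rintro _ ⟨p, ⟨hp, hpi⟩, rfl⟩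
      change Ideal.Quotient.mk _ p ∈ _
      rw [← support_sum_monomial_coeff p, map_sum]
      refine Submodule.sum_mem _ fun m hm => ?_
      by_cases he : ∃ j, e ≤ m j
      · rw [Ideal.Quotient.eq_zero_iff_mem.2 (monomial_mem_varPowIdeal he)]
        exact zero_mem _
      simp only [not_exists, not_le] at he
      have hdeg : m.degree = i := not_imp_comm.1 hpi.coeff_eq_zero (mem_support_iff.1 hm)
      set f : Fin n → Fin e := fun j => ⟨m j, he j⟩
      have hf : f ∈ T := Finset.mem_filter.2 ⟨Finset.mem_univ _,
        by rw [← hdeg, Finsupp.degree_eq_sum], mem_varPowIdeal_iff.1 hp m hm⟩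
      rw [mk_monomial, show m = exponentsOfFin f from Finsupp.ext fun j => rfl]
      exact Submodule.smul_mem _ _ (Submodule.subset_span ⟨⟨f, hf⟩, rfl⟩)
  have hindep : LinearIndependent k v := by
    rw [Fintype.linearIndependent_iff]
    intro g hg f
    have hsum : ∑ f : T, monomial (exponentsOfFin f.1) (g f) ∈ varPowIdeal (Fin n) k e := by
      rw [← Ideal.Quotient.eq_zero_iff_mem, ← hg, map_sum]
      exact Finset.sum_congr rfl fun f _ => mk_monomial _ _ _
    have h := coeff_eq_zero_of_mem_varPowIdeal hsum (m := exponentsOfFin f.1) fun j => (f.1 j).2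
    rwa [coeff_sum, Finset.sum_eq_single f, coeff_monomial, if_pos rfl] at h
    · intro f' _ hf'
      rw [coeff_monomial, if_neg]
      exact fun h => hf' (Subtype.ext (exponentsOfFin_injective h))
    · simp
  rw [← hspan, finrank_span_eq_card hindep, Fintype.card_coe]

end GradedPiece

section ThreeVariables

variable {k : Type} [Field k]

theorem span_X_pow_eq_varPowIdeal (e : ℕ) :
    Ideal.span {X 0 ^ e, X 1 ^ e, X 2 ^ e} = varPowIdeal (Fin 3) k e := by
  rw [varPowIdeal]
  congr 1
  ext p
  simp [Fin.exists_fin_succ, eq_comm]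

theorem mem_varPowIdeal_of_eq {e : ℕ} {p : MvPolynomial (Fin 3) k} (A B C' : MvPolynomial (Fin 3) k)
    (h : p = A * X 0 ^ e + B * X 1 ^ e + C' * X 2 ^ e) : p ∈ varPowIdeal (Fin 3) k e :=
  Ideal.mem_span_range_iff_exists_fun.2 ⟨![A, B, C'], by simp [Fin.sum_univ_three, h]⟩

theorem finrank_gradedPiece_three :
    Module.finrank k (gradedPiece (varPowIdeal (Fin 3) k 3) (varPowIdeal (Fin 3) k 2) 3) = 6 := by
  rw [finrank_gradedPiece_varPowIdeal]
  decide

theorem finrank_gradedPiece_four :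
    Module.finrank k (gradedPiece (varPowIdeal (Fin 3) k 3) (varPowIdeal (Fin 3) k 2) 4) = 6 := by
  rw [finrank_gradedPiece_varPowIdeal]
  decide

theorem X_sq_mul_X_sq_mul_X_sq_notMem :
    (X 0 ^ 2 * X 1 ^ 2 * X 2 ^ 2 : MvPolynomial (Fin 3) k) ∉ varPowIdeal (Fin 3) k 3 := by
  have h : (X 0 ^ 2 * X 1 ^ 2 * X 2 ^ 2 : MvPolynomial (Fin 3) k) =
      monomial (Finsupp.single 0 2 + Finsupp.single 1 2 + Finsupp.single 2 2) 1 := by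
    simp [X_pow_eq_monomial, monomial_mul]
  rw [h, monomial_one_mem_varPowIdeal_iff]
  simp [Fin.exists_fin_succ, Finsupp.single_apply]

theorem eq_zero_of_C_mul_X_sq_mul_X_sq_mul_X_sq_mem {r : k}
    (h : C r * (X 0 ^ 2 * X 1 ^ 2 * X 2 ^ 2) ∈ varPowIdeal (Fin 3) k 3) : r = 0 := by
  by_contra hr
  apply X_sq_mul_X_sq_mul_X_sq_notMem (k := k)
  simpa [← mul_assoc, ← map_mul, inv_mul_cancel₀ hr] using
    (varPowIdeal (Fin 3) k 3).mul_mem_left (C r⁻¹) h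

theorem X_mul_X_mul_X_mul_mem {p : MvPolynomial (Fin 3) k} (hp : p ∈ varPowIdeal (Fin 3) k 2) :
    X 0 * X 1 * X 2 * p ∈ varPowIdeal (Fin 3) k 3 := by
  obtain ⟨c, rfl⟩ := Ideal.mem_span_range_iff_exists_fun.1 hp
  refine mem_varPowIdeal_of_eq (c 0 * X 1 * X 2) (c 1 * X 0 * X 2) (c 2 * X 0 * X 1) ?_
  simp only [Fin.sum_univ_three]
  ring

noncomputable def obstructionQuadric (a b c : k) : MvPolynomial (Fin 3) k :=
  C a * X 0 * (C b * X 1) + C b * X 1 * (C c * X 2) + C c * X 2 * (C a * X 0)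
    - (C a * X 0) ^ 2 - (C b * X 1) ^ 2 - (C c * X 2) ^ 2

theorem linearForm_mul_obstructionQuadric_mul_mem (a b c : k) {p : MvPolynomial (Fin 3) k}
    (hp : p ∈ varPowIdeal (Fin 3) k 2) :
    (C a * X 0 + C b * X 1 + C c * X 2) * obstructionQuadric a b c * p ∈
      varPowIdeal (Fin 3) k 3 := by
  have h : (C a * X 0 + C b * X 1 + C c * X 2) * obstructionQuadric a b c * p =
      C (3 * a * b * c) * (X 0 * X 1 * X 2 * p)
        - C a ^ 3 * p * X 0 ^ 3 - C b ^ 3 * p * X 1 ^ 3 - C c ^ 3 * p * X 2 ^ 3 := by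
    simp only [obstructionQuadric, map_mul, map_ofNat]
    ring
  rw [h]
  refine sub_mem (sub_mem (sub_mem (Ideal.mul_mem_left _ _ (X_mul_X_mul_X_mul_mem hp)) ?_) ?_) ?_ <;>
    exact Ideal.mul_mem_left _ _ (Ideal.subset_span ⟨_, rfl⟩)

theorem obstructionQuadric_mul_add_mem (a b c : k) :
    obstructionQuadric a b c * (X 0 ^ 2 * X 1 ^ 2) + C (c ^ 2) * (X 0 ^ 2 * X 1 ^ 2 * X 2 ^ 2) ∈
        varPowIdeal (Fin 3) k 3 ∧
      obstructionQuadric a b c * (X 0 ^ 2 * X 2 ^ 2) + C (b ^ 2) * (X 0 ^ 2 * X 1 ^ 2 * X 2 ^ 2) ∈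
        varPowIdeal (Fin 3) k 3 ∧
      obstructionQuadric a b c * (X 1 ^ 2 * X 2 ^ 2) + C (a ^ 2) * (X 0 ^ 2 * X 1 ^ 2 * X 2 ^ 2) ∈
        varPowIdeal (Fin 3) k 3 := by
  refine ⟨mem_varPowIdeal_of_eq
      (C a * C b * X 1 ^ 3 + C c * C a * X 1 ^ 2 * X 2 - C a ^ 2 * X 0 * X 1 ^ 2)
      (C b * C c * X 0 ^ 2 * X 2 - C b ^ 2 * X 0 ^ 2 * X 1) 0 ?_,
    mem_varPowIdeal_of_eq
      (C a * C b * X 1 * X 2 ^ 2 + C c * C a * X 2 ^ 3 - C a ^ 2 * X 0 * X 2 ^ 2) 0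
      (C b * C c * X 0 ^ 2 * X 1 - C c ^ 2 * X 0 ^ 2 * X 2) ?_,
    mem_varPowIdeal_of_eq 0
      (C a * C b * X 0 * X 2 ^ 2 + C b * C c * X 2 ^ 3 - C b ^ 2 * X 1 * X 2 ^ 2)
      (C c * C a * X 0 * X 1 ^ 2 - C c ^ 2 * X 1 ^ 2 * X 2) ?_⟩ <;>
  · simp only [obstructionQuadric, map_pow]
    ring

theorem not_surjective_mul_linearForm (a b c : k) :
    ¬ ∀ m' ∈ gradedPiece (varPowIdeal (Fin 3) k 3) (varPowIdeal (Fin 3) k 2) 4,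
      ∃ m ∈ gradedPiece (varPowIdeal (Fin 3) k 3) (varPowIdeal (Fin 3) k 2) 3,
        Ideal.Quotient.mk _ (C a * X 0 + C b * X 1 + C c * X 2) * m = m' := by
  intro hsurj
  set J := varPowIdeal (Fin 3) k 3
  set ℓ : MvPolynomial (Fin 3) k := C a * X 0 + C b * X 1 + C c * X 2
  set G := obstructionQuadric a b c
  have hG : ∀ t ∈ varPowIdeal (Fin 3) k 2, t.IsHomogeneous 4 → G * t ∈ J := by
    intro t ht ht4
    obtain ⟨_, ⟨p, ⟨hp, -⟩, rfl⟩, hpt⟩ := hsurj _ (mk_mem_gradedPiece ht ht4)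
    have hdiff : ℓ * p - t ∈ J := Ideal.Quotient.eq.1 (by rw [map_mul]; exact hpt)
    rw [show G * t = ℓ * G * p - G * (ℓ * p - t) by ring]
    exact sub_mem (linearForm_mul_obstructionQuadric_mul_mem a b c hp) (J.mul_mem_left G hdiff)
  have hX : ∀ j, (X j : MvPolynomial (Fin 3) k).IsHomogeneous 1 := isHomogeneous_X k
  have hI : ∀ i j, X i ^ 2 * X j ^ 2 ∈ varPowIdeal (Fin 3) k 2 :=
    fun i j => Ideal.mul_mem_left _ _ (Ideal.subset_span ⟨j, rfl⟩)
  have hsq : ∀ (r : k) (i j : Fin 3),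
      G * (X i ^ 2 * X j ^ 2) + C (r ^ 2) * (X 0 ^ 2 * X 1 ^ 2 * X 2 ^ 2) ∈ J → r = 0 := by
    intro r i j h
    refine pow_eq_zero_iff two_ne_zero |>.1 (eq_zero_of_C_mul_X_sq_mul_X_sq_mul_X_sq_mem ?_)
    rw [← add_sub_cancel_left (G * (X i ^ 2 * X j ^ 2)) (C (r ^ 2) * _)]
    exact sub_mem h (hG _ (hI i j) (((hX i).pow 2).mul ((hX j).pow 2)))
  obtain ⟨hc, hb, ha⟩ := obstructionQuadric_mul_add_mem a b c
  obtain ⟨_, ⟨p, -, rfl⟩, hpt⟩ :=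
    hsurj _ (mk_mem_gradedPiece (hI 0 1) (((hX 0).pow 2).mul ((hX 1).pow 2)))
  have hxyJ : X 0 ^ 2 * X 1 ^ 2 ∈ J := by
    rw [← Ideal.Quotient.eq_zero_iff_mem, ← hpt]
    simp [ℓ, hsq a 1 2 ha, hsq b 0 2 hb, hsq c 0 1 hc]
  exact X_sq_mul_X_sq_mul_X_sq_notMem (J.mul_mem_right (X 2 ^ 2) hxyJ)

theorem not_injective_or_surjective_mul {ℓ : MvPolynomial (Fin 3) k}
    (hℓ : ℓ ∈ homogeneousSubmodule (Fin 3) k 1) :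
    ¬ ((∀ m ∈ gradedPiece (varPowIdeal (Fin 3) k 3) (varPowIdeal (Fin 3) k 2) 3,
          Ideal.Quotient.mk _ ℓ * m = 0 → m = 0) ∨
        ∀ m' ∈ gradedPiece (varPowIdeal (Fin 3) k 3) (varPowIdeal (Fin 3) k 2) (3 + 1),
          ∃ m ∈ gradedPiece (varPowIdeal (Fin 3) k 3) (varPowIdeal (Fin 3) k 2) 3,
            Ideal.Quotient.mk _ ℓ * m = m') := by
  have := Module.finite_of_finrank_pos (by rw [finrank_gradedPiece_three (k := k)]; norm_num)
  have := Module.finite_of_finrank_pos (by rw [finrank_gradedPiece_four (k := k)]; norm_num)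
  rw [mul_injective_iff_surjective_of_finrank_eq ((mem_homogeneousSubmodule 1 ℓ).1 hℓ)
    (finrank_gradedPiece_three.trans finrank_gradedPiece_four.symm), or_self]
  rw [homogeneousSubmodule_one_eq_span_X, Submodule.mem_span_range_iff_exists_fun] at hℓ
  obtain ⟨c, rfl⟩ := hℓ
  simpa [Fin.sum_univ_three, smul_eq_C_mul] using not_surjective_mul_linearForm (c 0) (c 1) (c 2)

end ThreeVariables

theorem stmt17_general {k : Type} [Field k]
    (I J : Ideal (MvPolynomial (Fin 3) k))
    (hI : I = Ideal.span {X 0 ^ 2, X 1 ^ 2, X 2 ^ 2})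
    (hJ : J = Ideal.span {X 0 ^ 3, X 1 ^ 3, X 2 ^ 3}) :
    Module.finrank k (gradedPiece J I 3) = Module.finrank k (gradedPiece J I 4) ∧
    Ideal.Quotient.mk J (X 0 ^ 2 * (X 1 - X 2) + X 1 ^ 2 * (X 2 - X 0)
      + X 2 ^ 2 * (X 0 - X 1)) ∈ gradedPiece J I 3 ∧
    Ideal.Quotient.mk J (X 0 ^ 2 * (X 1 - X 2) + X 1 ^ 2 * (X 2 - X 0)
      + X 2 ^ 2 * (X 0 - X 1) : MvPolynomial (Fin 3) k) ≠ 0 ∧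
    Ideal.Quotient.mk J ((X 0 + X 1 + X 2) * (X 0 ^ 2 * (X 1 - X 2) + X 1 ^ 2 * (X 2 - X 0)
      + X 2 ^ 2 * (X 0 - X 1)) : MvPolynomial (Fin 3) k) = 0 ∧
    ¬ HasWLP J I ∧ ¬ HasSLP J I := by
  rw [span_X_pow_eq_varPowIdeal] at hI hJ
  subst hI hJ
  set q : MvPolynomial (Fin 3) k :=
    X 0 ^ 2 * (X 1 - X 2) + X 1 ^ 2 * (X 2 - X 0) + X 2 ^ 2 * (X 0 - X 1)
  have hX : ∀ j, (X j : MvPolynomial (Fin 3) k).IsHomogeneous 1 := isHomogeneous_X k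
  have hq : ∀ i j l, (X i ^ 2 * (X j - X l) : MvPolynomial (Fin 3) k).IsHomogeneous 3 :=
    fun i j l => ((hX i).pow 2).mul ((hX j).sub (hX l))
  have hqI : q ∈ varPowIdeal (Fin 3) k 2 :=
    mem_varPowIdeal_of_eq (X 1 - X 2) (X 2 - X 0) (X 0 - X 1) (by ring)
  have hsocle : q * (X 1 * X 2 ^ 2) - X 0 ^ 2 * X 1 ^ 2 * X 2 ^ 2 ∈ varPowIdeal (Fin 3) k 3 :=
    mem_varPowIdeal_of_eq 0 (X 2 ^ 3 - X 0 * X 2 ^ 2)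
      (X 0 * X 1 * X 2 - X 0 ^ 2 * X 1 - X 1 ^ 2 * X 2) (by ring)
  refine ⟨finrank_gradedPiece_three.trans finrank_gradedPiece_four.symm,
    mk_mem_gradedPiece hqI (((hq 0 1 2).add (hq 1 2 0)).add (hq 2 0 1)), fun hq0 => ?_,
    Ideal.Quotient.eq_zero_iff_mem.2
      (mem_varPowIdeal_of_eq (X 1 - X 2) (X 2 - X 0) (X 0 - X 1) (by ring)),
    fun ⟨ℓ, hℓ, hW⟩ => not_injective_or_surjective_mul hℓ (hW 3),
    fun ⟨ℓ, hℓ, hS⟩ => not_injective_or_surjective_mul hℓ (by simpa using hS 1 one_pos 3)⟩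
  have h := sub_mem
    (Ideal.mul_mem_right (X 1 * X 2 ^ 2) _ (Ideal.Quotient.eq_zero_iff_mem.1 hq0)) hsocle
  rw [sub_sub_cancel] at h
  exact X_sq_mul_X_sq_mul_X_sq_notMem h

/-- **Example.** Let `k` be a field of characteristic zero, `S = k[x,y,z]`,
`I = (x², y², z²)` and `J = (x³, y³, z³)`.  Then `M = I/J` satisfies
`dim_k M₃ = dim_k M₄`, the class of `x²(y−z) + y²(z−x) + z²(x−y)` is a nonzero element of
`M₃` killed by `x + y + z`, and consequently `M` has neither the weak nor the strong
Lefschetz property. -/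
theorem stmt17 {k : Type} [Field k] [CharZero k]
    (I J : Ideal (MvPolynomial (Fin 3) k))
    (hI : I = Ideal.span {X 0 ^ 2, X 1 ^ 2, X 2 ^ 2})
    (hJ : J = Ideal.span {X 0 ^ 3, X 1 ^ 3, X 2 ^ 3}) :
    Module.finrank k (gradedPiece J I 3) = Module.finrank k (gradedPiece J I 4) ∧
    Ideal.Quotient.mk J (X 0 ^ 2 * (X 1 - X 2) + X 1 ^ 2 * (X 2 - X 0)
      + X 2 ^ 2 * (X 0 - X 1)) ∈ gradedPiece J I 3 ∧
    Ideal.Quotient.mk J (X 0 ^ 2 * (X 1 - X 2) + X 1 ^ 2 * (X 2 - X 0)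
      + X 2 ^ 2 * (X 0 - X 1) : MvPolynomial (Fin 3) k) ≠ 0 ∧
    Ideal.Quotient.mk J ((X 0 + X 1 + X 2) * (X 0 ^ 2 * (X 1 - X 2) + X 1 ^ 2 * (X 2 - X 0)
      + X 2 ^ 2 * (X 0 - X 1)) : MvPolynomial (Fin 3) k) = 0 ∧
    ¬ HasWLP J I ∧ ¬ HasSLP J I :=
  stmt17_general I J hI hJ
end
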